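/- Let p > 2 and r odd. For g = [(1+π^{l'}x), (1+π^{l'}y)] ∈ K^{l'} a commutator with l' = (r−1)/2, one has g = 1 + π^{2l'}(xy − yx), the element h = 1 + (1/2)π^{2l'}(xy − yx) satisfies h² = g, and h lies in the center of K^{l'}. -/

import Mathlib

open IsLocalRing
open scoped commutatorElement

/-- The principal congruence subgroup `1 + J^i · M_N(R)` inside `GL_N(R)`,
for an ideal `J` of a commutative ring `R`. -/
def congrSubgroup (N : ℕ) (R : Type) [CommRing R] (J : Ideal R) (i : ℕ) :
    Subgroup (GL (Fin N) R) where
  carrier := {u | ∀ a b, ((u : Matrix (Fin N) (Fin N) R) - 1) a b ∈ J ^ i}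
  one_mem' := by intro a b; simp
  mul_mem' := by
    intro u v hu hv a b
    have h : ((↑(u * v) : Matrix (Fin N) (Fin N) R) - 1)
        = ((↑u : Matrix (Fin N) (Fin N) R) - 1) * ((↑v : Matrix (Fin N) (Fin N) R) - 1)
          + (((↑u : Matrix (Fin N) (Fin N) R) - 1) + ((↑v : Matrix (Fin N) (Fin N) R) - 1)) := by
      rw [Units.val_mul]; noncomm_ring
    rw [h, Matrix.add_apply, Matrix.add_apply]
    refine Ideal.add_mem _ ?_ (Ideal.add_mem _ (hu a b) (hv a b))
    rw [Matrix.mul_apply]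
    exact Ideal.sum_mem _ fun c _ => Ideal.mul_mem_left _ _ (hv c b)
  inv_mem' := by
    intro u hu a b
    have h : ((↑u⁻¹ : Matrix (Fin N) (Fin N) R) - 1)
        = -((↑u⁻¹ : Matrix (Fin N) (Fin N) R) * ((↑u : Matrix (Fin N) (Fin N) R) - 1)) := by
      have huu : (↑u⁻¹ : Matrix (Fin N) (Fin N) R) * (↑u : Matrix (Fin N) (Fin N) R) = 1 := by
        rw [← Units.val_mul, inv_mul_cancel, Units.val_one]
      noncomm_ring [huu]
    rw [h, Matrix.neg_apply, Matrix.mul_apply]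
    exact neg_mem (Ideal.sum_mem _ fun c _ => Ideal.mul_mem_left _ _ (hu c b))

/-!
With `ε = π^{l'}` we have `ε³ = 0` in `o_r`, so
`(1 + εx)(1 + εy) = (1 + ε²[x, y])(1 + εy)(1 + εx)` holds exactly and gives the commutator.
The scalar `s = ½π^{2l'}` satisfies `s² = 0`, whence `(1 + s c)² = 1 + 2s c`, and `s`
annihilates `π^{l'} o_r`, so `s (w - 1) = 0` for `w ∈ K^{l'}`, which makes `1 + s c` commute
with `w`.
-/

section OneAddSmul

variable {R A : Type*} [CommRing R] [Ring A] [Algebra R A]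

theorem one_add_smul_mul_one_add_smul {t : R} (ht : t ^ 3 = 0) (x y : A) :
    (1 + t • x) * (1 + t • y)
      = (1 + t ^ 2 • (x * y - y * x)) * ((1 + t • y) * (1 + t • x)) := by
  have ht4 : t ^ 4 = 0 := by rw [pow_succ, ht, zero_mul]
  simp only [mul_add, add_mul, one_mul, mul_one, smul_mul_assoc, mul_smul_comm, sub_mul, smul_sub]
  match_scalars <;> ring_nf <;> simp [ht, ht4]

theorem val_commutatorElement_of_eq_one_add_smul {t : R} (ht : t ^ 3 = 0) {x y : A}
    {u v : Aˣ} (hu : (u : A) = 1 + t • x) (hv : (v : A) = 1 + t • y) :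
    ((⁅u, v⁆ : Aˣ) : A) = 1 + t ^ 2 • (x * y - y * x) := by
  have hcomm : ⁅u, v⁆ * (v * u) = u * v := by rw [commutatorElement_def]; group
  rw [← Units.mul_left_inj (v * u), ← Units.val_mul, hcomm, Units.val_mul, Units.val_mul,
    hu, hv]
  exact one_add_smul_mul_one_add_smul ht x y

theorem one_add_smul_mul_self {s : R} (hs : s ^ 2 = 0) (c : A) :
    (1 + s • c) * (1 + s • c) = 1 + (2 * s) • c := by
  have hsq : (s • c) * (s • c) = 0 := by rw [smul_mul_smul_comm, ← sq, hs, zero_smul]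
  rw [two_mul, add_smul]
  generalize s • c = a at hsq ⊢
  simp only [mul_add, add_mul, one_mul, mul_one, hsq, add_zero]
  abel

theorem commute_one_add_smul_of_smul_sub_one_eq_zero {s : R} (c : A) {w : A}
    (hw : s • (w - 1) = 0) : Commute (1 + s • c) w := by
  have hsw : s • w = algebraMap R A s := by
    rw [Algebra.algebraMap_eq_smul_one, ← sub_eq_zero, ← smul_sub, hw]
  refine (Commute.one_left w).add_left ?_
  rw [Commute, SemiconjBy, smul_mul_assoc, ← mul_smul_comm, hsw, mul_smul_comm,
    ← smul_mul_assoc, hsw, Algebra.commutes]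

end OneAddSmul

theorem smul_sub_one_eq_zero_of_mem_congrSubgroup {N : ℕ} {R : Type} [CommRing R]
    {J : Ideal R} {i k : ℕ} (hJ : J ^ (k + i) = ⊥) {s : R} (hs : s ∈ J ^ k)
    {w : GL (Fin N) R} (hw : w ∈ congrSubgroup N R J i) :
    s • ((w : Matrix (Fin N) (Fin N) R) - 1) = 0 := by
  ext a b
  have hmem : s * ((w : Matrix (Fin N) (Fin N) R) - 1) a b ∈ J ^ (k + i) :=
    pow_add J k i ▸ Ideal.mul_mem_mul hs (hw a b)
  rwa [hJ, Ideal.mem_bot] at hmem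

theorem commutator_square_root_central_general
    (o : Type) [CommRing o] [IsDomain o] [IsDiscreteValuationRing o]
    (N r : ℕ)
    (π : o) (hπ : maximalIdeal o = Ideal.span {π})
    (l' : ℕ) (hodd : 2 * l' + 1 = r) (hl' : 1 ≤ l')
    (half : o ⧸ (maximalIdeal o) ^ r) (hhalf : 2 * half = 1)
    (x y : Matrix (Fin N) (Fin N) (o ⧸ (maximalIdeal o) ^ r))
    (u v : GL (Fin N) (o ⧸ (maximalIdeal o) ^ r))
    (hu : (u : Matrix (Fin N) (Fin N) (o ⧸ (maximalIdeal o) ^ r))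
      = 1 + (Ideal.Quotient.mk ((maximalIdeal o) ^ r) π) ^ l' • x)
    (hv : (v : Matrix (Fin N) (Fin N) (o ⧸ (maximalIdeal o) ^ r))
      = 1 + (Ideal.Quotient.mk ((maximalIdeal o) ^ r) π) ^ l' • y) :
    ((⁅u, v⁆ : GL (Fin N) (o ⧸ (maximalIdeal o) ^ r)) :
        Matrix (Fin N) (Fin N) (o ⧸ (maximalIdeal o) ^ r))
      = 1 + (Ideal.Quotient.mk ((maximalIdeal o) ^ r) π) ^ (2 * l') • (x * y - y * x) ∧
    (1 + (half * (Ideal.Quotient.mk ((maximalIdeal o) ^ r) π) ^ (2 * l')) • (x * y - y * x)) *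
      (1 + (half * (Ideal.Quotient.mk ((maximalIdeal o) ^ r) π) ^ (2 * l')) • (x * y - y * x))
      = ((⁅u, v⁆ : GL (Fin N) (o ⧸ (maximalIdeal o) ^ r)) :
        Matrix (Fin N) (Fin N) (o ⧸ (maximalIdeal o) ^ r)) ∧
    ∀ w ∈ congrSubgroup N _
        ((maximalIdeal o).map (Ideal.Quotient.mk ((maximalIdeal o) ^ r))) l',
      Commute
        (1 + (half * (Ideal.Quotient.mk ((maximalIdeal o) ^ r) π) ^ (2 * l')) • (x * y - y * x))
        ((w : GL (Fin N) (o ⧸ (maximalIdeal o) ^ r)) :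
          Matrix (Fin N) (Fin N) (o ⧸ (maximalIdeal o) ^ r)) := by
  set J := (maximalIdeal o).map (Ideal.Quotient.mk ((maximalIdeal o) ^ r))
  set t := Ideal.Quotient.mk ((maximalIdeal o) ^ r) π
  have ht : t ∈ J := Ideal.mem_map_of_mem _ (hπ ▸ Ideal.mem_span_singleton_self π)
  have hJr : J ^ r = ⊥ := by rw [← Ideal.map_pow, Ideal.map_quotient_self]
  have hJ : ∀ n, r ≤ n → J ^ n = ⊥ := fun n hn =>
    eq_bot_iff.mpr (hJr ▸ Ideal.pow_le_pow_right hn)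
  have ht_pow : ∀ n, r ≤ n → t ^ n = 0 := fun n hn => by
    simpa [hJ n hn] using Ideal.pow_mem_pow ht n
  have hg : ((⁅u, v⁆ : GL (Fin N) _) : Matrix (Fin N) (Fin N) _)
      = 1 + t ^ (2 * l') • (x * y - y * x) := by
    have h3 : (t ^ l') ^ 3 = 0 := by rw [← pow_mul]; exact ht_pow _ (by omega)
    rw [val_commutatorElement_of_eq_one_add_smul h3 hu hv, ← pow_mul, mul_comm]
  refine ⟨hg, ?_, fun w hw => ?_⟩
  · have hs : (half * t ^ (2 * l')) ^ 2 = 0 := by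
      rw [mul_pow, ← pow_mul, ht_pow _ (by omega), mul_zero]
    rw [one_add_smul_mul_self hs, ← mul_assoc, hhalf, one_mul, hg]
  · have hs : half * t ^ (2 * l') ∈ J ^ (2 * l') :=
      Ideal.mul_mem_left _ _ (Ideal.pow_mem_pow ht _)
    exact commute_one_add_smul_of_smul_sub_one_eq_zero _
      (smul_sub_one_eq_zero_of_mem_congrSubgroup (hJ _ (by omega)) hs hw)

/-- Let `p > 2` and `r` odd, `l' = (r-1)/2`. For `u = 1 + π^{l'}x` and `v = 1 + π^{l'}y`
in `K^{l'}`, the commutator `g = [u, v]` equals `1 + π^{2l'}(xy - yx)`, the element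
`h = 1 + ½π^{2l'}(xy - yx)` satisfies `h² = g`, and `h` is central in `K^{l'}`. -/
theorem commutator_square_root_central
    (o : Type) [CommRing o] [IsDomain o] [IsDiscreteValuationRing o]
    [Finite (ResidueField o)] (N r : ℕ) (hN : 2 ≤ N) (hr : 2 ≤ r)
    (π : o) (hπ : maximalIdeal o = Ideal.span {π})
    (l' : ℕ) (hodd : 2 * l' + 1 = r) (hl' : 1 ≤ l')
    (half : o ⧸ (maximalIdeal o) ^ r) (hhalf : 2 * half = 1)
    (x y : Matrix (Fin N) (Fin N) (o ⧸ (maximalIdeal o) ^ r))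
    (u v : GL (Fin N) (o ⧸ (maximalIdeal o) ^ r))
    (hu : (u : Matrix (Fin N) (Fin N) (o ⧸ (maximalIdeal o) ^ r))
      = 1 + (Ideal.Quotient.mk ((maximalIdeal o) ^ r) π) ^ l' • x)
    (hv : (v : Matrix (Fin N) (Fin N) (o ⧸ (maximalIdeal o) ^ r))
      = 1 + (Ideal.Quotient.mk ((maximalIdeal o) ^ r) π) ^ l' • y) :
    ((⁅u, v⁆ : GL (Fin N) (o ⧸ (maximalIdeal o) ^ r)) :
        Matrix (Fin N) (Fin N) (o ⧸ (maximalIdeal o) ^ r))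
      = 1 + (Ideal.Quotient.mk ((maximalIdeal o) ^ r) π) ^ (2 * l') • (x * y - y * x) ∧
    (1 + (half * (Ideal.Quotient.mk ((maximalIdeal o) ^ r) π) ^ (2 * l')) • (x * y - y * x)) *
      (1 + (half * (Ideal.Quotient.mk ((maximalIdeal o) ^ r) π) ^ (2 * l')) • (x * y - y * x))
      = ((⁅u, v⁆ : GL (Fin N) (o ⧸ (maximalIdeal o) ^ r)) :
        Matrix (Fin N) (Fin N) (o ⧸ (maximalIdeal o) ^ r)) ∧
    ∀ w ∈ congrSubgroup N _
        ((maximalIdeal o).map (Ideal.Quotient.mk ((maximalIdeal o) ^ r))) l',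
      Commute
        (1 + (half * (Ideal.Quotient.mk ((maximalIdeal o) ^ r) π) ^ (2 * l')) • (x * y - y * x))
        ((w : GL (Fin N) (o ⧸ (maximalIdeal o) ^ r)) :
          Matrix (Fin N) (Fin N) (o ⧸ (maximalIdeal o) ^ r)) :=
  commutator_square_root_central_general o N r π hπ l' hodd hl' half hhalf x y u v hu hv
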